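/- Let Δ be the rectangle of width c and height d with boundary data (μ₁, μ₂, ν₁, ν₂), where μ₂ = (1,…,1) consists of c parts equal to 1. If γ is a λ-increasing lattice path from (0,d) to (c,0) contained in Δ with mult(γ) ≠ 0, then γ has no down-right step, i.e. no step γ(k+1) − γ(k) whose first coordinate is positive and whose second coordinate is negative. -/
import Mathlib


open Classical

noncomputable section

namespace TropPaths

/-- Lattice points of the plane. -/
abbrev Pt := ℤ × ℤ

/-- The order on `ℤ²` induced by `λ(x,y) = x - εy` for a small irrational `ε > 0`:
`p ≺ q` iff `p₁ < q₁`, or (`p₁ = q₁` and `p₂ > q₂`). -/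
def lamLT (p q : Pt) : Prop := p.1 < q.1 ∨ (p.1 = q.1 ∧ q.2 < p.2)

/-- A lattice path, recorded as the list of its points, is `λ`-increasing. -/
def Increasing (γ : List Pt) : Prop := List.Chain' lamLT γ

/-- The determinant of two vectors in `ℤ²`. -/
def det (u v : Pt) : ℤ := u.1 * v.2 - u.2 * v.1

/-- The `k`-th point of a path (junk value out of range). -/
def pt (γ : List Pt) (k : ℕ) : Pt := γ.getD k (0, 0)

/-- The `k`-th step vector of a path. -/
def stepAt (γ : List Pt) (k : ℕ) : Pt := pt γ (k + 1) - pt γ k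

/-- The list of all step vectors of a path. -/
def steps (γ : List Pt) : List Pt := List.zipWith (fun a b => b - a) γ γ.tail

/-- The multiset of down steps `(0,-s)`, `s > 0`, of a path. -/
def downSteps (γ : List Pt) : Multiset Pt :=
  Multiset.filter (fun v => v.1 = 0 ∧ v.2 < 0) (steps γ : Multiset Pt)

/-- The multiset of up-right steps of a path. -/
def upRightSteps (γ : List Pt) : Multiset Pt :=
  Multiset.filter (fun v => 0 < v.1 ∧ 0 < v.2) (steps γ : Multiset Pt)

/-- The path makes a turn of sign `s` at the (interior) index `k`; for left turns
`s = (0 < ·)`, for right turns `s = (· < 0)`. -/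
def TurnAt (s : ℤ → Prop) (γ : List Pt) (k : ℕ) : Prop :=
  0 < k ∧ k + 1 < γ.length ∧ s (det (pt γ k - pt γ (k - 1)) (pt γ (k + 1) - pt γ k))

/-- `k` is the first turn of sign `s` of the path. -/
def FirstTurn (s : ℤ → Prop) (γ : List Pt) (k : ℕ) : Prop :=
  TurnAt s γ k ∧ ∀ j, TurnAt s γ j → k ≤ j

/-- Twice the area of the triangle with vertices `γ(k-1), γ(k), γ(k+1)`. -/
def triArea2 (γ : List Pt) (k : ℕ) : ℕ :=
  (det (pt γ k - pt γ (k - 1)) (pt γ (k + 1) - pt γ k)).natAbs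

/-- The path obtained by cutting the corner at index `k`, i.e. deleting the point `γ(k)`. -/
def cut (γ : List Pt) (k : ℕ) : List Pt := γ.eraseIdx k

/-- The path obtained by completing the parallelogram at index `k`, i.e. replacing
`γ(k)` by `γ(k-1) + γ(k+1) - γ(k)`. -/
def push (γ : List Pt) (k : ℕ) : List Pt :=
  γ.set k (pt γ (k - 1) + pt γ (k + 1) - pt γ k)

/-- All points of the path lie in `Δ`. -/
def Inside (Δ : Set Pt) (γ : List Pt) : Prop := ∀ z ∈ γ, z ∈ Δ

/-- Mikhalkin's multiplicity recursion, as a functional relation: `MultRel Δ Init s γ m`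
means that the recursion (performed always at the *first* turn of sign `s`) assigns the
multiplicity `m` to the path `γ`.  Here `Δ` is the set of lattice points of the polygon,
`Init` the set of initial paths (of multiplicity `1`), and `s` the turn sign
(`0 < ·` for left turns / `mult₊`, `· < 0` for right turns / `mult₋`). -/
inductive MultRel (Δ : Set Pt) (Init : List Pt → Prop) (s : ℤ → Prop) : List Pt → ℕ → Prop
  | init {γ : List Pt} : Init γ → MultRel Δ Init s γ 1
  | noTurn {γ : List Pt} : ¬Init γ → (∀ k, ¬TurnAt s γ k) → MultRel Δ Init s γ 0
  | stepIn {γ : List Pt} {k m' m'' : ℕ} : ¬Init γ → FirstTurn s γ k →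
      Inside Δ (push γ k) → MultRel Δ Init s (cut γ k) m' →
      MultRel Δ Init s (push γ k) m'' →
      MultRel Δ Init s γ (triArea2 γ k * m' + m'')
  | stepOut {γ : List Pt} {k m' : ℕ} : ¬Init γ → FirstTurn s γ k →
      ¬Inside Δ (push γ k) → MultRel Δ Init s (cut γ k) m' →
      MultRel Δ Init s γ (triArea2 γ k * m')

/-- The multiplicity function determined by Mikhalkin's recursion. -/
def multOf (Δ : Set Pt) (Init : List Pt → Prop) (s : ℤ → Prop) (γ : List Pt) : ℕ :=
  if h : ∃ m, MultRel Δ Init s γ m then h.choose else 0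

/-- `γ ≺ δ`: the path `δ` is obtained from `γ` by finitely many steps of the multiplicity
recursion (each step cuts the corner at the first turn of sign `s`, or completes the
parallelogram there). -/
inductive Reaches (Δ : Set Pt) (Init : List Pt → Prop) (s : ℤ → Prop) : List Pt → List Pt → Prop
  | refl (γ : List Pt) : Reaches Δ Init s γ γ
  | cutStep {γ δ : List Pt} {k : ℕ} : ¬Init γ → FirstTurn s γ k →
      Reaches Δ Init s (cut γ k) δ → Reaches Δ Init s γ δ
  | pushStep {γ δ : List Pt} {k : ℕ} : ¬Init γ → FirstTurn s γ k →
      Inside Δ (push γ k) → Reaches Δ Init s (push γ k) δ → Reaches Δ Init s γ δ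

/-- The lattice path starting at `p` with the given list of step vectors. -/
def pathFrom : Pt → List Pt → List Pt
  | p, [] => [p]
  | p, v :: vs => p :: pathFrom (p + v) vs

/-- Horizontal (rightward) steps of the given sizes. -/
def hSteps (l : List ℕ) : List Pt := l.map fun k => ((k : ℤ), 0)

/-- Vertical downward steps of the given sizes. -/
def dSteps (l : List ℕ) : List Pt := l.map fun k => ((0 : ℤ), -(k : ℤ))

/-- A multiset of positive integers is a partition of `t`. -/
def IsPartition (m : Multiset ℕ) (t : ℕ) : Prop := (∀ k ∈ m, 0 < k) ∧ m.sum = t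

/-! ## The rectangle `[0,c] × [0,d]` -/

/-- The lattice points of the rectangle with vertices `(0,0), (c,0), (0,d), (c,d)`. -/
def rect (c d : ℕ) : Set Pt := {z | 0 ≤ z.1 ∧ z.1 ≤ (c : ℤ) ∧ 0 ≤ z.2 ∧ z.2 ≤ (d : ℤ)}

/-- `β₊`-initial paths of the rectangle: from `p = (0,d)` clockwise along the top edge with
step sizes the parts of `μ₂` and then down the right edge with step sizes the parts of `ν₂`. -/
def InitPlusRect (d : ℕ) (μ₂ ν₂ : Multiset ℕ) (γ : List Pt) : Prop :=
  ∃ s t : List ℕ, (s : Multiset ℕ) = μ₂ ∧ (t : Multiset ℕ) = ν₂ ∧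
    γ = pathFrom (0, (d : ℤ)) (hSteps s ++ dSteps t)

/-- `β₋`-initial paths of the rectangle: from `p = (0,d)` counterclockwise down the left edge
with step sizes the parts of `ν₁` and then along the bottom edge with step sizes the parts
of `μ₁`. -/
def InitMinusRect (d : ℕ) (μ₁ ν₁ : Multiset ℕ) (γ : List Pt) : Prop :=
  ∃ s t : List ℕ, (s : Multiset ℕ) = ν₁ ∧ (t : Multiset ℕ) = μ₁ ∧
    γ = pathFrom (0, (d : ℤ)) (dSteps s ++ hSteps t)

/-- `mult₊` for the rectangle with boundary data `(μ₁, μ₂, ν₁, ν₂)`. -/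
def multPlusRect (c d : ℕ) (μ₂ ν₂ : Multiset ℕ) : List Pt → ℕ :=
  multOf (rect c d) (InitPlusRect d μ₂ ν₂) (fun x => 0 < x)

/-- `mult₋` for the rectangle with boundary data `(μ₁, μ₂, ν₁, ν₂)`. -/
def multMinusRect (c d : ℕ) (μ₁ ν₁ : Multiset ℕ) : List Pt → ℕ :=
  multOf (rect c d) (InitMinusRect d μ₁ ν₁) (fun x => x < 0)

/-- `mult = mult₊ · mult₋` for the rectangle with boundary data `(μ₁, μ₂, ν₁, ν₂)`. -/
def multRect (c d : ℕ) (μ₁ μ₂ ν₁ ν₂ : Multiset ℕ) (γ : List Pt) : ℕ :=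
  multPlusRect c d μ₂ ν₂ γ * multMinusRect c d μ₁ ν₁ γ

/-- A `λ`-increasing lattice path from `(0,d)` to `(c,0)` contained in the rectangle. -/
def IsPathRect (c d : ℕ) (γ : List Pt) : Prop :=
  Increasing γ ∧ γ.head? = some (0, (d : ℤ)) ∧ γ.getLast? = some ((c : ℤ), 0) ∧
    Inside (rect c d) γ

/-- The genericity condition: all subset sums of the `xᵢ` are distinct. -/
def Generic {n : ℕ} (x : Fin n → ℕ) : Prop :=
  ∀ I J : Finset (Fin n), I ≠ J → ∑ i ∈ I, x i ≠ ∑ j ∈ J, x j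



/-! ## Auxiliary machinery for Statement 2 -/

/-- A vector is an admissible step of a `λ`-increasing path. -/
def stepOK (v : Pt) : Prop := 0 < v.1 ∨ (v.1 = 0 ∧ v.2 < 0)

/-- A *bad* step: positive first coordinate and (length `≥ 2` horizontally or going down). -/
def BadStep (v : Pt) : Prop := 0 < v.1 ∧ (2 ≤ v.1 ∨ v.2 < 0)

/-- Index-wise formulation of `Increasing`. -/
def IncrIdx (γ : List Pt) : Prop := ∀ k, k + 1 < γ.length → stepOK (stepAt γ k)

/-- The path has a bad step. -/
def HasBad (γ : List Pt) : Prop := ∃ k, k + 1 < γ.length ∧ BadStep (stepAt γ k)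

lemma pt_lt {γ : List Pt} {k : ℕ} (h : k < γ.length) : pt γ k = γ[k] :=
  List.getD_eq_getElem _ _ h

lemma pt_ge {γ : List Pt} {k : ℕ} (h : γ.length ≤ k) : pt γ k = (0, 0) :=
  List.getD_eq_default _ _ h

lemma incrIdx_of_increasing {γ : List Pt} (h : Increasing γ) : IncrIdx γ := by
  intro k hk
  have h2 := List.isChain_iff_getElem.mp h k (by omega)
  rw [← pt_lt (show k < γ.length by omega), ← pt_lt (show k + 1 < γ.length from hk)] at h2
  unfold lamLT at h2
  unfold stepAt stepOK
  simp only [Prod.fst_sub, Prod.snd_sub]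
  omega

lemma pt_cut {γ : List Pt} {k : ℕ} (hk : k < γ.length) (j : ℕ) :
    pt (cut γ k) j = if j < k then pt γ j else pt γ (j + 1) := by
  unfold cut
  by_cases hj : j < (γ.eraseIdx k).length
  · rw [show pt (γ.eraseIdx k) j = (γ.eraseIdx k)[j] from pt_lt hj, List.getElem_eraseIdx]
    have hlen : (γ.eraseIdx k).length = γ.length - 1 := by
      rw [List.length_eraseIdx, if_pos hk]
    by_cases hjk : j < k
    · rw [dif_pos hjk, if_pos hjk, pt_lt (show j < γ.length by omega)]
    · rw [dif_neg hjk, if_neg hjk, pt_lt (show j + 1 < γ.length by omega)]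
  · have hlen : (γ.eraseIdx k).length = γ.length - 1 := by
      rw [List.length_eraseIdx, if_pos hk]
    rw [pt_ge (le_of_not_gt hj), if_neg (by omega), pt_ge (by omega)]

lemma pt_push {γ : List Pt} {k : ℕ} (hk : k < γ.length) (j : ℕ) :
    pt (push γ k) j =
      if j = k then pt γ (k - 1) + pt γ (k + 1) - pt γ k else pt γ j := by
  unfold push
  by_cases hj : j < γ.length
  · have hj' : j < (γ.set k (pt γ (k - 1) + pt γ (k + 1) - pt γ k)).length := by
      rw [List.length_set]; exact hj
    rw [pt_lt hj', List.getElem_set]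
    by_cases hjk : k = j
    · rw [if_pos hjk, if_pos hjk.symm]
    · rw [if_neg hjk, if_neg (fun h => hjk h.symm), pt_lt hj]
  · have h1 : (γ.set k (pt γ (k - 1) + pt γ (k + 1) - pt γ k)).length ≤ j := by
      rw [List.length_set]; omega
    rw [pt_ge h1, if_neg (by omega), pt_ge (by omega)]

lemma stepAt_cut_lt {γ : List Pt} {k j : ℕ} (hk : k < γ.length) (hj : j + 1 < k) :
    stepAt (cut γ k) j = stepAt γ j := by
  unfold stepAt
  rw [pt_cut hk (j + 1), pt_cut hk j, if_pos hj, if_pos (by omega)]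

lemma stepAt_cut_eq {γ : List Pt} {k : ℕ} (hk0 : 0 < k) (hk : k < γ.length) :
    stepAt (cut γ k) (k - 1) = stepAt γ (k - 1) + stepAt γ k := by
  have e : k - 1 + 1 = k := by omega
  unfold stepAt
  rw [pt_cut hk (k - 1 + 1), pt_cut hk (k - 1), if_neg (by omega), if_pos (by omega), e]
  abel

lemma stepAt_cut_ge {γ : List Pt} {k j : ℕ} (hk : k < γ.length) (hj : k ≤ j) :
    stepAt (cut γ k) j = stepAt γ (j + 1) := by
  unfold stepAt
  rw [pt_cut hk (j + 1), pt_cut hk j, if_neg (by omega), if_neg (by omega)]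

lemma stepAt_push_left {γ : List Pt} {k : ℕ} (hk0 : 0 < k) (hk : k + 1 < γ.length) :
    stepAt (push γ k) (k - 1) = stepAt γ k := by
  have e : k - 1 + 1 = k := by omega
  unfold stepAt
  rw [pt_push (show k < γ.length by omega) (k - 1 + 1),
    pt_push (show k < γ.length by omega) (k - 1), if_pos e, if_neg (by omega)]
  abel

lemma stepAt_push_right {γ : List Pt} {k : ℕ} (hk0 : 0 < k) (hk : k + 1 < γ.length) :
    stepAt (push γ k) k = stepAt γ (k - 1) := by
  have e : k - 1 + 1 = k := by omega
  unfold stepAt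
  rw [pt_push (show k < γ.length by omega) (k + 1),
    pt_push (show k < γ.length by omega) k, if_neg (by omega), if_pos rfl, e]
  abel

lemma stepAt_push_other {γ : List Pt} {k j : ℕ} (hk : k < γ.length)
    (hj1 : j ≠ k - 1) (hj2 : j ≠ k) : stepAt (push γ k) j = stepAt γ j := by
  unfold stepAt
  rw [pt_push hk (j + 1), pt_push hk j, if_neg (by omega), if_neg (by omega)]

lemma stepOK_add {u v : Pt} (hu : stepOK u) (hv : stepOK v) : stepOK (u + v) := by
  simp only [stepOK, Prod.fst_add, Prod.snd_add] at hu hv ⊢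
  omega

lemma badStep_add {u v : Pt} (hu : stepOK u) (hv : stepOK v)
    (hdet : 0 < det u v) (h : BadStep u ∨ BadStep v) : BadStep (u + v) := by
  have hx : ¬ (0 < u.1 ∧ v.1 = 0 ∧ v.2 < 0) := by
    rintro ⟨a, b, c⟩
    unfold det at hdet
    rw [b, mul_zero, sub_zero] at hdet
    have := mul_neg_of_pos_of_neg a c
    linarith
  simp only [stepOK, BadStep, Prod.fst_add, Prod.snd_add] at hu hv h ⊢
  omega

lemma length_cut {γ : List Pt} {k : ℕ} (hk : k < γ.length) :
    (cut γ k).length = γ.length - 1 := by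
  unfold cut
  rw [List.length_eraseIdx, if_pos hk]

lemma length_push {γ : List Pt} (k : ℕ) : (push γ k).length = γ.length := by
  unfold push
  rw [List.length_set]

lemma incrIdx_cut {γ : List Pt} {k : ℕ} (h : IncrIdx γ) (hk0 : 0 < k)
    (hk : k + 1 < γ.length) : IncrIdx (cut γ k) := by
  intro j hj
  rw [length_cut (show k < γ.length by omega)] at hj
  rcases lt_trichotomy (j + 1) k with h1 | h1 | h1
  · rw [stepAt_cut_lt (by omega) h1]
    exact h j (by omega)
  · have hj' : j = k - 1 := by omega
    rw [hj', stepAt_cut_eq hk0 (by omega)]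
    exact stepOK_add (h (k - 1) (by omega)) (h k (by omega))
  · rw [stepAt_cut_ge (by omega) (by omega)]
    exact h (j + 1) (by omega)

lemma hasBad_cut {γ : List Pt} {k : ℕ} (h : IncrIdx γ)
    (ht : TurnAt (fun x => 0 < x) γ k) (hb : HasBad γ) : HasBad (cut γ k) := by
  obtain ⟨hk0, hk, hdet⟩ := ht
  obtain ⟨j, hj, hbad⟩ := hb
  have key : 0 < det (stepAt γ (k - 1)) (stepAt γ k) := by
    have e : k - 1 + 1 = k := by omega
    unfold stepAt
    rw [e]
    exact hdet
  have hlen : (cut γ k).length = γ.length - 1 := length_cut (by omega)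
  rcases lt_trichotomy (j + 1) k with h1 | h1 | h1
  · exact ⟨j, by omega, by rw [stepAt_cut_lt (by omega) h1]; exact hbad⟩
  · refine ⟨k - 1, by omega, ?_⟩
    rw [stepAt_cut_eq hk0 (by omega)]
    refine badStep_add (h (k - 1) (by omega)) (h k (by omega)) key ?_
    left
    have : j = k - 1 := by omega
    exact this ▸ hbad
  · by_cases h2 : j = k
    · refine ⟨k - 1, by omega, ?_⟩
      rw [stepAt_cut_eq hk0 (by omega)]
      refine badStep_add (h (k - 1) (by omega)) (h k (by omega)) key ?_
      right
      exact h2 ▸ hbad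
    · refine ⟨j - 1, by omega, ?_⟩
      rw [stepAt_cut_ge (by omega) (by omega), show j - 1 + 1 = j by omega]
      exact hbad

lemma incrIdx_push {γ : List Pt} {k : ℕ} (h : IncrIdx γ) (hk0 : 0 < k)
    (hk : k + 1 < γ.length) : IncrIdx (push γ k) := by
  intro j hj
  rw [length_push] at hj
  by_cases h1 : j = k - 1
  · rw [h1, stepAt_push_left hk0 hk]
    exact h k hk
  · by_cases h2 : j = k
    · rw [h2, stepAt_push_right hk0 hk]
      exact h (k - 1) (by omega)
    · rw [stepAt_push_other (by omega) h1 h2]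
      exact h j hj

lemma hasBad_push {γ : List Pt} {k : ℕ} (hk0 : 0 < k) (hk : k + 1 < γ.length)
    (hb : HasBad γ) : HasBad (push γ k) := by
  obtain ⟨j, hj, hbad⟩ := hb
  by_cases h1 : j = k - 1
  · refine ⟨k, by rw [length_push]; omega, ?_⟩
    rw [stepAt_push_right hk0 hk]
    exact h1 ▸ hbad
  · by_cases h2 : j = k
    · refine ⟨k - 1, by rw [length_push]; omega, ?_⟩
      rw [stepAt_push_left hk0 hk]
      exact h2 ▸ hbad
    · exact ⟨j, by rw [length_push]; omega,
        by rw [stepAt_push_other (by omega) h1 h2]; exact hbad⟩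

lemma pt_pathFrom_zero (p : Pt) (l : List Pt) : pt (pathFrom p l) 0 = p := by
  cases l <;> simp [pathFrom, pt]

lemma length_pathFrom (p : Pt) (l : List Pt) : (pathFrom p l).length = l.length + 1 := by
  induction l generalizing p with
  | nil => simp [pathFrom]
  | cons v vs ih => simp [pathFrom, ih]

lemma stepAt_pathFrom (p : Pt) (l : List Pt) (k : ℕ) (h : k < l.length) :
    stepAt (pathFrom p l) k = l[k] := by
  induction l generalizing p k with
  | nil => simp at h
  | cons v vs ih =>
    cases k with
    | zero =>
      show pt (pathFrom p (v :: vs)) 1 - pt (pathFrom p (v :: vs)) 0 = v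
      rw [show pathFrom p (v :: vs) = p :: pathFrom (p + v) vs from rfl]
      rw [show pt (p :: pathFrom (p + v) vs) 1 = pt (pathFrom (p + v) vs) 0 from rfl]
      rw [pt_pathFrom_zero, show pt (p :: pathFrom (p + v) vs) 0 = p from rfl]
      abel
    | succ k =>
      have e : stepAt (pathFrom p (v :: vs)) (k + 1) = stepAt (pathFrom (p + v) vs) k := by
        rw [show pathFrom p (v :: vs) = p :: pathFrom (p + v) vs from rfl]
        unfold stepAt pt
        rw [List.getD_cons_succ, List.getD_cons_succ]
      rw [e, ih (p + v) k (by simpa using h)]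
      simp

lemma mem_hSteps {s : List ℕ} {v : Pt} (h : v ∈ hSteps s) :
    ∃ a : ℕ, a ∈ s ∧ v = ((a : ℤ), (0 : ℤ)) := by
  unfold hSteps at h
  rw [List.mem_map] at h
  obtain ⟨a, ha, hfa⟩ := h
  simp only [List.bind_eq_flatMap, List.mem_flatMap, List.mem_pure] at ha
  obtain ⟨b, hb, rfl⟩ := ha
  exact ⟨b, hb, hfa.symm⟩

lemma mem_dSteps {t : List ℕ} {v : Pt} (h : v ∈ dSteps t) :
    ∃ a : ℕ, a ∈ t ∧ v = ((0 : ℤ), -(a : ℤ)) := by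
  unfold dSteps at h
  rw [List.mem_map] at h
  obtain ⟨a, ha, hfa⟩ := h
  simp only [List.bind_eq_flatMap, List.mem_flatMap, List.mem_pure] at ha
  obtain ⟨b, hb, rfl⟩ := ha
  exact ⟨b, hb, hfa.symm⟩

lemma not_hasBad_initPlus {c d : ℕ} {ν₂ : Multiset ℕ} {γ : List Pt}
    (h : InitPlusRect d (Multiset.replicate c 1) ν₂ γ) : ¬ HasBad γ := by
  obtain ⟨s, t, hs, ht, rfl⟩ := h
  rintro ⟨k, hk, hbad⟩
  rw [length_pathFrom] at hk
  rw [stepAt_pathFrom _ _ k (by omega)] at hbad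
  have hmem : (hSteps s ++ dSteps t)[k] ∈ hSteps s ++ dSteps t := List.getElem_mem _
  rcases List.mem_append.mp hmem with hm | hm
  · obtain ⟨a, ha, hfa⟩ := mem_hSteps hm
    rw [hfa] at hbad
    have ha1 : a = 1 := (Multiset.eq_replicate.mp hs).2 a (Multiset.mem_coe.mpr ha)
    rw [ha1] at hbad
    obtain ⟨-, h2 | h2⟩ := hbad <;> norm_num at h2
  · obtain ⟨a, ha, hfa⟩ := mem_dSteps hm
    rw [hfa] at hbad
    obtain ⟨h1, -⟩ := hbad
    norm_num at h1

lemma multRel_eq_zero_of_hasBad {Δ : Set Pt} {Init : List Pt → Prop}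
    (hInit : ∀ δ, Init δ → ¬ HasBad δ) :
    ∀ {γ : List Pt} {m : ℕ}, MultRel Δ Init (fun x => 0 < x) γ m →
      IncrIdx γ → HasBad γ → m = 0 := by
  intro γ m h
  induction h with
  | init hI => exact fun _ hb => absurd hb (hInit _ hI)
  | noTurn _ _ => exact fun _ _ => rfl
  | stepIn hI hft hin h1 h2 ih1 ih2 =>
    intro hinc hb
    obtain ⟨hk0, hk, -⟩ := hft.1
    rw [ih1 (incrIdx_cut hinc hk0 hk) (hasBad_cut hinc hft.1 hb),
      ih2 (incrIdx_push hinc hk0 hk) (hasBad_push hk0 hk hb), mul_zero, add_zero]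
  | stepOut hI hft hin h1 ih1 =>
    intro hinc hb
    obtain ⟨hk0, hk, -⟩ := hft.1
    rw [ih1 (incrIdx_cut hinc hk0 hk) (hasBad_cut hinc hft.1 hb), mul_zero]

lemma multOf_eq_zero {Δ : Set Pt} {Init : List Pt → Prop} {s : ℤ → Prop} {γ : List Pt}
    (h : ∀ m, MultRel Δ Init s γ m → m = 0) : multOf Δ Init s γ = 0 := by
  unfold multOf
  split
  · next hex => exact h _ hex.choose_spec
  · rfl

/-- In the rectangle of width `c` and height `d` with `μ₂ = (1,…,1)`, if
`mult(γ) ≠ 0` then `γ` has no down-right step. -/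
theorem no_downRight_step_of_mult_ne_zero (c d : ℕ) (hc : 0 < c) (hd : 0 < d)
    (μ₁ ν₁ ν₂ : Multiset ℕ)
    (hμ₁ : IsPartition μ₁ c) (hν₁ : IsPartition ν₁ d) (hν₂ : IsPartition ν₂ d)
    (γ : List Pt) (hγ : IsPathRect c d γ)
    (hmult : multRect c d μ₁ (Multiset.replicate c 1) ν₁ ν₂ γ ≠ 0) :
    ∀ k, k + 1 < γ.length → ¬(0 < (stepAt γ k).1 ∧ (stepAt γ k).2 < 0) := by
  intro k hk hstep
  have hbad : HasBad γ := ⟨k, hk, hstep.1, Or.inr hstep.2⟩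
  apply hmult
  have h0 : multPlusRect c d (Multiset.replicate c 1) ν₂ γ = 0 := by
    unfold multPlusRect
    exact multOf_eq_zero fun m hm =>
      multRel_eq_zero_of_hasBad (fun δ hδ => not_hasBad_initPlus hδ) hm
        (incrIdx_of_increasing hγ.1) hbad
  unfold multRect
  rw [h0, zero_mul]


end TropPaths
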